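/- arXiv:1712.10037 — 3 statements merged into one kernel-verified Lean document; each statement's English description precedes it below -/
import Mathlib

section
/- Let 0 < ε and N ≥ 1 with ε/N ≤ 1. If μ = λ = √(ε/N), where σ(0)=1−μ, σ(1)=μ and σ_th(k) = (1−λ)λ^k, then the total variation distance satisfies D(σ_th, σ) ≤ ε/N. -/
/-- With `μ = λ = √(ε/N)`, the thermal state is `ε/N`-close in TV distance to the
lossy single photon. -/
theorem tv_thermal_loss_bound (N ε : ℝ) (hN : 1 ≤ N) (hε : 0 < ε) (hεN : ε / N ≤ 1) :
    (1 / 2) * ∑' k : ℕ,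
        |(1 - Real.sqrt (ε / N)) * Real.sqrt (ε / N) ^ k -
          (if k = 0 then 1 - Real.sqrt (ε / N) else if k = 1 then Real.sqrt (ε / N) else 0)| ≤
      ε / N := by
  set s := Real.sqrt (ε / N) with hsdef
  have hN0 : 0 < N := lt_of_lt_of_le one_pos hN
  have hεN0 : 0 ≤ ε / N := le_of_lt (div_pos hε hN0)
  have hs0 : 0 ≤ s := Real.sqrt_nonneg _
  have hs2 : s ^ 2 = ε / N := Real.sq_sqrt hεN0
  have hs1 : s ≤ 1 := Real.sqrt_le_one.mpr hεN
  -- rewrite the summand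
  set g : ℕ → ℝ := fun k => if k = 0 then 0 else if k = 1 then s ^ 2 else (1 - s) * s ^ k
    with hgdef
  have hfg : ∀ k : ℕ,
      |(1 - s) * s ^ k - (if k = 0 then 1 - s else if k = 1 then s else 0)| = g k := by
    intro k
    match k with
    | 0 => simp [hgdef]
    | 1 =>
      simp only [hgdef]
      norm_num
      rw [show (1 - s) * s - s = -(s ^ 2) by ring, abs_neg, abs_of_nonneg (by positivity)]
    | (n + 2) =>
      have h0 : n + 2 ≠ 0 := by omega
      have h1 : n + 2 ≠ 1 := by omega
      simp only [hgdef, if_neg h0, if_neg h1, sub_zero]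
      exact abs_of_nonneg (mul_nonneg (by linarith) (pow_nonneg hs0 _))
  simp only [hfg]
  rcases eq_or_lt_of_le hs1 with heq | hlt
  · -- s = 1 case: g is the indicator of {1} with value 1
    have h1 : (ε / N) = 1 := by rw [← hs2, heq]; norm_num
    have hg1 : ∀ k, g k = if k = 1 then (1:ℝ) else 0 := by
      intro k
      match k with
      | 0 => simp [hgdef]
      | 1 =>
        simp only [hgdef]
        norm_num
        rw [heq]; norm_num
      | (n + 2) => simp [hgdef, heq]
    simp only [hg1]
    rw [tsum_ite_eq]
    rw [h1]; norm_num
  · have hne : (1 : ℝ) - s ≠ 0 := by linarith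
    have hsum2 : Summable (fun k : ℕ => g (k + 2)) := by
      have : (fun k : ℕ => g (k + 2)) = fun k : ℕ => ((1 - s) * s ^ 2) * s ^ k := by
        funext k
        simp [hgdef, pow_add]
        ring
      rw [this]
      exact (summable_geometric_of_lt_one hs0 hlt).mul_left _
    have hg : Summable g := (summable_nat_add_iff 2).mp hsum2
    have hg1 : Summable (fun k : ℕ => g (k + 1)) := (summable_nat_add_iff 1).mpr hg
    have htail : ∑' k : ℕ, g (k + 2) = s ^ 2 := by
      have h1 : (fun k : ℕ => g (k + 2)) = fun k : ℕ => ((1 - s) * s ^ 2) * s ^ k := by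
        funext k
        simp [hgdef, pow_add]
        ring
      rw [h1, tsum_mul_left, tsum_geometric_of_lt_one hs0 hlt]
      field_simp
      try ring
    have hcalc : ∑' k : ℕ, g k = 2 * s ^ 2 := by
      have h12 : (fun k : ℕ => g (k + 1 + 1)) = fun k : ℕ => g (k + 2) := rfl
      rw [Summable.tsum_eq_zero_add hg, Summable.tsum_eq_zero_add hg1, h12, htail]
      simp [hgdef]
      try ring
    rw [hcalc, ← hs2]
    linarith
end

section
/- Let N ≥ 1 and 0 < ε with ε/N ≤ 1. Define one-mode distributions σ (with σ(0)=1−μ, σ(1)=μ) and σ_th(k)=(1−λ)λ^k, with λ = μ ≤ √(ε/N). Then the total variation distance between the N-fold product distributions satisfies D(σ_th^⊗N, σ^⊗N) ≤ ε. -/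
open scoped BigOperators

/-- The `n`-fold product of a summable nonnegative sequence is summable over `Fin n → ℕ`
and its total sum is the `n`-th power of the total sum. -/
lemma prod_pi_summable (p : ℕ → ℝ) (hp0 : ∀ k, 0 ≤ p k) (hp : Summable p) :
    ∀ n : ℕ, Summable (fun x : Fin n → ℕ => ∏ i, p (x i)) ∧
      (∑' x : Fin n → ℕ, ∏ i, p (x i)) = (∑' k, p k) ^ n := by
  intro n
  induction n with
  | zero =>
    refine ⟨Summable.of_finite, ?_⟩
    have h1 : (fun x : Fin 0 → ℕ => ∏ i, p (x i)) = fun _ => 1 := by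
      funext x; simp
    rw [h1, pow_zero]
    exact tsum_eq_single (fun _ => 0) (fun b hb => absurd (Subsingleton.elim b _) hb)
  | succ n ih =>
    obtain ⟨ihs, iht⟩ := ih
    have hP0 : ∀ g : Fin n → ℕ, 0 ≤ ∏ i, p (g i) :=
      fun g => Finset.prod_nonneg fun i _ => hp0 _
    set e : (ℕ × (Fin n → ℕ)) ≃ (Fin (n+1) → ℕ) :=
      Fin.consEquiv (fun _ : Fin (n+1) => ℕ) with he
    have hcomp : ∀ z : ℕ × (Fin n → ℕ),
        (∏ i, p ((e z) i)) = p z.1 * ∏ i, p (z.2 i) := by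
      intro z
      rw [Fin.prod_univ_succ]
      simp [he, Fin.consEquiv]
    have hp0' : (0 : ℕ → ℝ) ≤ p := hp0
    have hP0' : (0 : (Fin n → ℕ) → ℝ) ≤ fun g : Fin n → ℕ => ∏ i, p (g i) := hP0
    have hsum2 : Summable fun z : ℕ × (Fin n → ℕ) => p z.1 * ∏ i, p (z.2 i) := by
      have h := Summable.mul_of_nonneg hp ihs hp0' hP0'
      exact h
    have hnorm : Summable fun k => ‖p k‖ :=
      hp.congr fun k => (Real.norm_of_nonneg (hp0 k)).symm
    have hnormP : Summable fun g : Fin n → ℕ => ‖∏ i, p (g i)‖ :=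
      ihs.congr fun g => (Real.norm_of_nonneg (hP0 g)).symm
    have hmul := tsum_mul_tsum_of_summable_norm hnorm hnormP
    constructor
    · rw [← Equiv.summable_iff e]
      exact hsum2.congr fun z => (hcomp z).symm
    · have h1 : (∑' x : Fin (n+1) → ℕ, ∏ i, p (x i))
          = ∑' z : ℕ × (Fin n → ℕ), p z.1 * ∏ i, p (z.2 i) := by
        rw [← Equiv.tsum_eq e]
        exact tsum_congr hcomp
      rw [h1, ← hmul, iht, pow_succ]
      ring

/-- Subadditivity of total variation distance over products (hybrid argument). -/
lemma tv_prod_le (p q : ℕ → ℝ) (hp0 : ∀ k, 0 ≤ p k) (hq0 : ∀ k, 0 ≤ q k)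
    (hp : Summable p) (hq : Summable q)
    (hp1 : ∑' k, p k ≤ 1) (hq1 : ∑' k, q k ≤ 1) :
    ∀ n : ℕ,
      Summable (fun x : Fin n → ℕ => |(∏ i, p (x i)) - ∏ i, q (x i)|) ∧
      (∑' x : Fin n → ℕ, |(∏ i, p (x i)) - ∏ i, q (x i)|)
        ≤ n * ∑' k, |p k - q k| := by
  have hd0 : ∀ k, 0 ≤ |p k - q k| := fun k => abs_nonneg _
  have hd : Summable fun k => |p k - q k| := by
    apply Summable.of_nonneg_of_le hd0 (fun k => ?_) (hp.add hq)
    calc |p k - q k| ≤ |p k| + |q k| := abs_sub _ _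
    _ = p k + q k := by rw [abs_of_nonneg (hp0 k), abs_of_nonneg (hq0 k)]
  have hD0 : 0 ≤ ∑' k, |p k - q k| := tsum_nonneg hd0
  intro n
  induction n with
  | zero =>
    refine ⟨Summable.of_finite, ?_⟩
    have h1 : (fun x : Fin 0 → ℕ => |(∏ i, p (x i)) - ∏ i, q (x i)|) = fun _ => 0 := by
      funext x; simp
    rw [h1, tsum_zero]
    simp
  | succ n ih =>
    obtain ⟨ihs, iht⟩ := ih
    obtain ⟨hQs, hQt⟩ := prod_pi_summable q hq0 hq n
    have hP0 : ∀ g : Fin n → ℕ, 0 ≤ ∏ i, p (g i) :=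
      fun g => Finset.prod_nonneg fun i _ => hp0 _
    have hQ0 : ∀ g : Fin n → ℕ, 0 ≤ ∏ i, q (g i) :=
      fun g => Finset.prod_nonneg fun i _ => hq0 _
    have hR0 : ∀ g : Fin n → ℕ, 0 ≤ |(∏ i, p (g i)) - ∏ i, q (g i)| :=
      fun g => abs_nonneg _
    set e : (ℕ × (Fin n → ℕ)) ≃ (Fin (n+1) → ℕ) :=
      Fin.consEquiv (fun _ : Fin (n+1) => ℕ) with he
    have hcomp : ∀ z : ℕ × (Fin n → ℕ),
        |(∏ i, p ((e z) i)) - ∏ i, q ((e z) i)|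
          = |p z.1 * ∏ i, p (z.2 i) - q z.1 * ∏ i, q (z.2 i)| := by
      intro z
      rw [Fin.prod_univ_succ, Fin.prod_univ_succ]
      simp [he, Fin.consEquiv]
    have hbound : ∀ z : ℕ × (Fin n → ℕ),
        |p z.1 * ∏ i, p (z.2 i) - q z.1 * ∏ i, q (z.2 i)|
          ≤ p z.1 * |(∏ i, p (z.2 i)) - ∏ i, q (z.2 i)|
            + |p z.1 - q z.1| * ∏ i, q (z.2 i) := by
      rintro ⟨a, g⟩
      have h : p a * (∏ i, p (g i)) - q a * ∏ i, q (g i)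
          = p a * ((∏ i, p (g i)) - ∏ i, q (g i)) + (p a - q a) * ∏ i, q (g i) := by ring
      rw [h]
      calc _ ≤ |p a * ((∏ i, p (g i)) - ∏ i, q (g i))| + |(p a - q a) * ∏ i, q (g i)| :=
            abs_add_le _ _
      _ = p a * |(∏ i, p (g i)) - ∏ i, q (g i)| + |p a - q a| * ∏ i, q (g i) := by
            rw [abs_mul, abs_mul, abs_of_nonneg (hp0 a), abs_of_nonneg (hQ0 g)]
    have hp0' : (0 : ℕ → ℝ) ≤ p := hp0
    have hd0' : (0 : ℕ → ℝ) ≤ fun k => |p k - q k| := hd0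
    have hR0' : (0 : (Fin n → ℕ) → ℝ) ≤
        fun g : Fin n → ℕ => |(∏ i, p (g i)) - ∏ i, q (g i)| := hR0
    have hQ0' : (0 : (Fin n → ℕ) → ℝ) ≤ fun g : Fin n → ℕ => ∏ i, q (g i) := hQ0
    have hs1 : Summable fun z : ℕ × (Fin n → ℕ) =>
        p z.1 * |(∏ i, p (z.2 i)) - ∏ i, q (z.2 i)| := by
      have h := Summable.mul_of_nonneg hp ihs hp0' hR0'
      exact h
    have hs2 : Summable fun z : ℕ × (Fin n → ℕ) => |p z.1 - q z.1| * ∏ i, q (z.2 i) := by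
      have h := Summable.mul_of_nonneg hd hQs hd0' hQ0'
      exact h
    have hsH := hs1.add hs2
    have hsG : Summable fun z : ℕ × (Fin n → ℕ) =>
        |p z.1 * ∏ i, p (z.2 i) - q z.1 * ∏ i, q (z.2 i)| :=
      Summable.of_nonneg_of_le (fun z => abs_nonneg _) hbound hsH
    constructor
    · rw [← Equiv.summable_iff e]
      exact hsG.congr fun z => (hcomp z).symm
    · have h1 : (∑' x : Fin (n+1) → ℕ, |(∏ i, p (x i)) - ∏ i, q (x i)|)
          = ∑' z : ℕ × (Fin n → ℕ), |p z.1 * ∏ i, p (z.2 i) - q z.1 * ∏ i, q (z.2 i)| := by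
        rw [← Equiv.tsum_eq e]
        exact tsum_congr hcomp
      have h2 : (∑' z : ℕ × (Fin n → ℕ), |p z.1 * ∏ i, p (z.2 i) - q z.1 * ∏ i, q (z.2 i)|)
          ≤ ∑' z : ℕ × (Fin n → ℕ),
              (p z.1 * |(∏ i, p (z.2 i)) - ∏ i, q (z.2 i)|
                + |p z.1 - q z.1| * ∏ i, q (z.2 i)) :=
        Summable.tsum_le_tsum hbound hsG hsH
      have hnormp : Summable fun k => ‖p k‖ :=
        hp.congr fun k => (Real.norm_of_nonneg (hp0 k)).symm
      have hnormd : Summable fun k => ‖|p k - q k|‖ :=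
        hd.congr fun k => (Real.norm_of_nonneg (hd0 k)).symm
      have hnormR : Summable fun g : Fin n → ℕ => ‖|(∏ i, p (g i)) - ∏ i, q (g i)|‖ :=
        ihs.congr fun g => (Real.norm_of_nonneg (hR0 g)).symm
      have hnormQ : Summable fun g : Fin n → ℕ => ‖∏ i, q (g i)‖ :=
        hQs.congr fun g => (Real.norm_of_nonneg (hQ0 g)).symm
      have h3 : (∑' z : ℕ × (Fin n → ℕ),
              (p z.1 * |(∏ i, p (z.2 i)) - ∏ i, q (z.2 i)|
                + |p z.1 - q z.1| * ∏ i, q (z.2 i)))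
          = (∑' k, p k) * (∑' g : Fin n → ℕ, |(∏ i, p (g i)) - ∏ i, q (g i)|)
            + (∑' k, |p k - q k|) * ∑' g : Fin n → ℕ, ∏ i, q (g i) := by
        rw [Summable.tsum_add hs1 hs2, tsum_mul_tsum_of_summable_norm hnormp hnormR,
          tsum_mul_tsum_of_summable_norm hnormd hnormQ]
      have hp0' : 0 ≤ ∑' k, p k := tsum_nonneg hp0
      have hQ1 : (∑' g : Fin n → ℕ, ∏ i, q (g i)) ≤ 1 := by
        rw [hQt]
        exact pow_le_one₀ (tsum_nonneg hq0) hq1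
      have hRt0 : 0 ≤ ∑' g : Fin n → ℕ, |(∏ i, p (g i)) - ∏ i, q (g i)| :=
        tsum_nonneg hR0
      have t1 : (∑' k, p k) * (∑' g : Fin n → ℕ, |(∏ i, p (g i)) - ∏ i, q (g i)|)
          ≤ 1 * ((n : ℝ) * ∑' k, |p k - q k|) :=
        mul_le_mul hp1 iht hRt0 (by norm_num)
      have t2 : (∑' k, |p k - q k|) * (∑' g : Fin n → ℕ, ∏ i, q (g i))
          ≤ (∑' k, |p k - q k|) * 1 :=
        mul_le_mul_of_nonneg_left hQ1 hD0
      calc (∑' x : Fin (n+1) → ℕ, |(∏ i, p (x i)) - ∏ i, q (x i)|)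
          = _ := h1
      _ ≤ _ := h2
      _ = _ := h3
      _ ≤ 1 * ((n : ℝ) * ∑' k, |p k - q k|) + (∑' k, |p k - q k|) * 1 := add_le_add t1 t2
      _ = ((n : ℕ) + 1 : ℝ) * ∑' k, |p k - q k| := by ring
      _ = ((n + 1 : ℕ) : ℝ) * ∑' k, |p k - q k| := by push_cast; ring

/-- Theorem 1 of the paper (classical version): if the uniform transmission satisfies
`μ ≤ √(ε/N)` then the `N`-fold lossy single-photon input is `ε`-close in total variation
distance to the `N`-fold thermal (geometric) distribution with parameter `λ = μ`. -/
theorem tv_lossy_input_thermal (N : ℕ) (hN : 1 ≤ N) (ε : ℝ) (hε : 0 < ε)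
    (hεN : ε / (N : ℝ) ≤ 1) (μ : ℝ) (hμ0 : 0 ≤ μ) (hμ : μ ≤ Real.sqrt (ε / N)) :
    (1 / 2) * ∑' x : Fin N → ℕ,
        |(∏ i, (1 - μ) * μ ^ (x i)) -
          ∏ i, (if x i = 0 then 1 - μ else if x i = 1 then μ else 0)| ≤ ε := by
  have hNpos : (0 : ℝ) < N := by exact_mod_cast Nat.pos_of_ne_zero (by omega)
  have hεN0 : (0 : ℝ) ≤ ε / N := le_of_lt (div_pos hε hNpos)
  have hμ1 : μ ≤ 1 := hμ.trans (Real.sqrt_le_one.mpr hεN)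
  have hμsq : μ ^ 2 ≤ ε / N := by
    calc μ ^ 2 ≤ Real.sqrt (ε / N) ^ 2 := by gcongr
    _ = ε / N := Real.sq_sqrt hεN0
  set p : ℕ → ℝ := fun k => (1 - μ) * μ ^ k with hpdef
  set q : ℕ → ℝ := fun k => if k = 0 then 1 - μ else if k = 1 then μ else 0 with hqdef
  have hp0 : ∀ k, 0 ≤ p k := fun k =>
    mul_nonneg (by linarith) (pow_nonneg hμ0 k)
  have hq0 : ∀ k, 0 ≤ q k := by
    intro k
    simp only [hqdef]
    split_ifs <;> linarith
  have hp : Summable p := by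
    rcases eq_or_lt_of_le hμ1 with h1 | h1
    · have h : p = fun _ => 0 := by funext k; simp [hpdef, h1]
      rw [h]; exact summable_zero
    · exact (summable_geometric_of_lt_one hμ0 h1).mul_left _
  have hq : Summable q := by
    apply summable_of_ne_finset_zero (s := {0, 1})
    intro k hk
    simp only [Finset.mem_insert, Finset.mem_singleton] at hk
    push_neg at hk
    simp [hqdef, hk.1, hk.2]
  have hgeosum : (∑' k : ℕ, (1 - μ) * μ ^ k) ≤ 1 := by
    rcases eq_or_lt_of_le hμ1 with h1 | h1
    · simp [h1]
    · rw [tsum_mul_left, tsum_geometric_of_lt_one hμ0 h1,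
        mul_inv_cancel₀ (by linarith)]
  have hp1 : ∑' k, p k ≤ 1 := hgeosum
  have hq1 : ∑' k, q k ≤ 1 := by
    rw [tsum_eq_sum (s := {0, 1}) (by
      intro k hk
      simp only [Finset.mem_insert, Finset.mem_singleton] at hk
      push_neg at hk
      simp [hqdef, hk.1, hk.2])]
    rw [Finset.sum_pair (by norm_num)]
    simp [hqdef]
  have hd0 : ∀ k, 0 ≤ |p k - q k| := fun k => abs_nonneg _
  have hd : Summable fun k => |p k - q k| := by
    apply Summable.of_nonneg_of_le hd0 (fun k => ?_) (hp.add hq)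
    calc |p k - q k| ≤ |p k| + |q k| := abs_sub _ _
    _ = p k + q k := by rw [abs_of_nonneg (hp0 k), abs_of_nonneg (hq0 k)]
  have hsingle : (∑' k, |p k - q k|) ≤ 2 * μ ^ 2 := by
    have hsplit := Summable.sum_add_tsum_nat_add (f := fun k => |p k - q k|) 2 hd
    rw [← hsplit]
    have hhead : (∑ i ∈ Finset.range 2, |p i - q i|) = μ ^ 2 := by
      rw [Finset.sum_range_succ, Finset.sum_range_one]
      have e0 : p 0 - q 0 = 0 := by simp [hpdef, hqdef]
      have hq1v : q 1 = μ := by simp [hqdef]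
      have e1 : p 1 - q 1 = -μ ^ 2 := by simp only [hpdef, hq1v]; ring
      rw [e0, e1, abs_zero, abs_neg, abs_of_nonneg (sq_nonneg μ)]
      ring
    have htail : (∑' k : ℕ, |p (k + 2) - q (k + 2)|) ≤ μ ^ 2 := by
      have heq : ∀ k : ℕ, |p (k + 2) - q (k + 2)| = μ ^ 2 * ((1 - μ) * μ ^ k) := by
        intro k
        have hz : q (k + 2) = 0 := by simp [hqdef]
        rw [hz, sub_zero, abs_of_nonneg (hp0 _)]
        simp only [hpdef, pow_add]
        ring
      calc (∑' k : ℕ, |p (k + 2) - q (k + 2)|)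
          = ∑' k : ℕ, μ ^ 2 * ((1 - μ) * μ ^ k) := tsum_congr heq
      _ = μ ^ 2 * ∑' k : ℕ, (1 - μ) * μ ^ k := tsum_mul_left
      _ ≤ μ ^ 2 * 1 := mul_le_mul_of_nonneg_left hgeosum (sq_nonneg μ)
      _ = μ ^ 2 := mul_one _
    rw [hhead]
    linarith
  obtain ⟨hTs, hTle⟩ := tv_prod_le p q hp0 hq0 hp hq hp1 hq1 N
  have hfinal : (∑' x : Fin N → ℕ, |(∏ i, p (x i)) - ∏ i, q (x i)|) ≤ 2 * ε := by
    calc _ ≤ (N : ℝ) * ∑' k, |p k - q k| := hTle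
    _ ≤ (N : ℝ) * (2 * μ ^ 2) := mul_le_mul_of_nonneg_left hsingle (le_of_lt hNpos)
    _ ≤ (N : ℝ) * (2 * (ε / N)) := by gcongr
    _ = 2 * ε := by field_simp
  have hmain : (∑' x : Fin N → ℕ,
      |(∏ i, (1 - μ) * μ ^ (x i)) -
        ∏ i, (if x i = 0 then 1 - μ else if x i = 1 then μ else 0)|) ≤ 2 * ε := hfinal
  linarith
end

section
/- Let X ~ Poisson(x) with x ≥ 0, and let S_t = ξ_1 + ... + ξ_t be a sum of t independent Bernoulli random variables with success probability x/t (assuming x ≤ t). Then the total variation distance between the law of S_t and the Poisson(x) distribution is at most (1 − e^{−x})·x/t, and in particular at most x²/t. -/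
/-!
Stein–Chen method. For a finite `A ⊆ ℕ` the Stein equation `x g(k+1) - k g(k) = 1_A(k) - Po(x)(A)`
has an explicit solution `g_A`, the sum over `a ∈ A` of the solutions for the singletons `{a}`.
For `g_{a}` the increment `Δg(m) = g(m+1) - g(m)` is nonpositive unless `m = a`, and then it is
at most `(1 - e^{-x})/x`, because the ratio `Po(x)(i+1)/Po(x)(i) = x/(i+1)` decreases in `i`;
hence every increment of `g_A` is at most `(1 - e^{-x})/x`. For `S ~ Bin(n+1, p)` with
`(n+1) p = x`, Pascal's rule and size-biasing give
`E[x g(S+1) - S g(S)] = (n+1) p² E[Δg(S'+1)]` with `S' ~ Bin(n, p)`. Taking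
`A = {k : Po(x)(k) ≤ Bin(n+1, p)(k)}`, the left side is `Bin(A) - Po(A)`, which is the total
variation distance.
-/

open Finset Real
open scoped Nat

namespace SteinChen

noncomputable section

lemma half_tsum_abs_eq_sum_filter {α : Type*} {d : α → ℝ} (hd : Summable d)
    (h₀ : ∑' a, d a = 0) (s : Finset α) (hs : ∀ a ∉ s, d a ≤ 0) :
    1 / 2 * ∑' a, |d a| = ∑ a ∈ s with 0 ≤ d a, d a := by
  have hpos : HasSum (fun a ↦ if 0 ≤ d a then d a else 0) (∑ a ∈ s with 0 ≤ d a, d a) := by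
    rw [sum_filter]
    refine hasSum_sum_of_ne_finset_zero fun a ha ↦ ?_
    split_ifs with h
    · exact le_antisymm (hs a ha) h
    · rfl
  have habs (a : α) : |d a| = 2 * (if 0 ≤ d a then d a else 0) - d a := by
    split_ifs with h
    · rw [abs_of_nonneg h]; ring
    · rw [abs_of_neg (not_le.1 h)]; ring
  rw [tsum_congr habs, (hpos.mul_left 2).summable.tsum_sub hd, tsum_mul_left, hpos.tsum_eq, h₀]
  ring

variable {x p : ℝ}

def poisson (x : ℝ) (k : ℕ) : ℝ := exp (-x) * x ^ k / k !

def poissonCDF (x : ℝ) (k : ℕ) : ℝ := ∑ i ∈ range (k + 1), poisson x i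

lemma poisson_pos (hx : 0 < x) (k : ℕ) : 0 < poisson x k := by
  unfold poisson; positivity

lemma poisson_nonneg (hx : 0 ≤ x) (k : ℕ) : 0 ≤ poisson x k := by
  unfold poisson; positivity

lemma poisson_zero_right (x : ℝ) : poisson x 0 = exp (-x) := by
  simp [poisson]

lemma hasSum_poisson (x : ℝ) : HasSum (poisson x) 1 := by
  have h := (NormedSpace.expSeries_div_hasSum_exp x).mul_left (exp (-x))
  rw [← exp_eq_exp_ℝ, ← exp_add, neg_add_cancel, exp_zero] at h
  exact h.congr_fun fun k ↦ mul_div_assoc _ _ _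

lemma succ_mul_poisson_succ (x : ℝ) (k : ℕ) :
    (k + 1) * poisson x (k + 1) = x * poisson x k := by
  simp only [poisson, Nat.factorial_succ, Nat.cast_mul, Nat.cast_succ, pow_succ]
  field_simp

lemma poisson_succ_mul_poisson_le (hx : 0 ≤ x) {i k : ℕ} (hik : i ≤ k) :
    poisson x (k + 1) * poisson x i ≤ poisson x k * poisson x (i + 1) := by
  have hik' : (i : ℝ) + 1 ≤ k + 1 := by exact_mod_cast Nat.succ_le_succ hik
  have h := mul_le_mul_of_nonneg_right hik'
    (mul_nonneg hx (mul_nonneg (poisson_nonneg hx k) (poisson_nonneg hx i)))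
  refine le_of_mul_le_mul_left ?_ (by positivity : (0 : ℝ) < (i + 1) * (k + 1))
  linear_combination h + (i + 1) * poisson x i * succ_mul_poisson_succ x k
    - (k + 1) * poisson x k * succ_mul_poisson_succ x i

lemma poissonCDF_succ (x : ℝ) (k : ℕ) :
    poissonCDF x (k + 1) = poissonCDF x k + poisson x (k + 1) :=
  sum_range_succ _ _

lemma poisson_succ_mul_poissonCDF_le (hx : 0 ≤ x) (k : ℕ) :
    poisson x (k + 1) * poissonCDF x k ≤ poisson x k * (poissonCDF x (k + 1) - exp (-x)) := by
  rw [poissonCDF, poissonCDF, sum_range_succ' _ (k + 1), poisson_zero_right, add_sub_cancel_right,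
    mul_sum, mul_sum]
  exact sum_le_sum fun i hi ↦ poisson_succ_mul_poisson_le hx (mem_range_succ_iff.1 hi)

lemma one_sub_poissonCDF (x : ℝ) (k : ℕ) :
    1 - poissonCDF x k = ∑' i, poisson x (i + (k + 1)) := by
  rw [← (hasSum_poisson x).tsum_eq, ← (hasSum_poisson x).summable.sum_add_tsum_nat_add (k + 1),
    poissonCDF, add_sub_cancel_left]

lemma poisson_mul_one_sub_poissonCDF_succ_le (hx : 0 ≤ x) (k : ℕ) :
    poisson x k * (1 - poissonCDF x (k + 1)) ≤ poisson x (k + 1) * (1 - poissonCDF x k) := by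
  have hs (m : ℕ) : Summable fun i ↦ poisson x (i + m) :=
    (summable_nat_add_iff m).2 (hasSum_poisson x).summable
  rw [one_sub_poissonCDF, one_sub_poissonCDF, ← tsum_mul_left, ← tsum_mul_left]
  refine Summable.tsum_le_tsum (fun i ↦ ?_) ((hs _).mul_left _) ((hs _).mul_left _)
  rw [show i + (k + 1 + 1) = i + (k + 1) + 1 by ring, mul_comm, mul_comm (poisson x (k + 1))]
  exact poisson_succ_mul_poisson_le hx (by omega)

/-- `steinSol x j k` is `g(k + 1)`, where `g` solves `x g(k + 1) - k g(k) = 1[k = j] - poisson x j`;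
the value `g(0)` never matters since it is multiplied by `k = 0`. -/
def steinSol (x : ℝ) (j k : ℕ) : ℝ :=
  poisson x j * ((if j ≤ k then 1 else 0) - poissonCDF x k) / (x * poisson x k)

lemma stein_eq_steinSol (hx : 0 < x) (j k : ℕ) :
    x * steinSol x j k - k * steinSol x j (k - 1) = (if k = j then 1 else 0) - poisson x j := by
  cases k with
  | zero =>
    have := (poisson_pos hx 0).ne'
    simp only [steinSol, poissonCDF, zero_add, sum_range_one, Nat.cast_zero, zero_mul, sub_zero,
      Nat.le_zero, eq_comm (a := 0)]
    split_ifs with hj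
    · subst hj; field_simp
    · field_simp; ring
  | succ k =>
    have := (poisson_pos hx (k + 1)).ne'
    have : (k : ℝ) + 1 ≠ 0 := by positivity
    simp only [steinSol, Nat.add_sub_cancel, poissonCDF_succ, Nat.cast_add, Nat.cast_one,
      ← succ_mul_poisson_succ x k]
    rcases lt_trichotomy j (k + 1) with hj | rfl | hj
    · rw [if_pos hj.le, if_pos (Nat.lt_succ_iff.1 hj), if_neg hj.ne']
      field_simp; ring
    · rw [if_pos le_rfl, if_neg (by omega), if_pos rfl]
      field_simp; ring
    · rw [if_neg hj.not_ge, if_neg (by omega), if_neg hj.ne]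
      field_simp; ring

lemma stein_eq_sum_steinSol (hx : 0 < x) (A : Finset ℕ) (k : ℕ) :
    x * ∑ a ∈ A, steinSol x a k - k * ∑ a ∈ A, steinSol x a (k - 1)
      = (if k ∈ A then 1 else 0) - ∑ a ∈ A, poisson x a := by
  rw [mul_sum, mul_sum, ← sum_sub_distrib, sum_congr rfl fun a _ ↦ stein_eq_steinSol hx a k,
    sum_sub_distrib, sum_ite_eq]

lemma steinSol_succ_le (hx : 0 < x) {j k : ℕ} (hj : j ≠ k + 1) :
    steinSol x j (k + 1) ≤ steinSol x j k := by
  have hk := poisson_pos hx k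
  have hk' := poisson_pos hx (k + 1)
  simp only [steinSol, mul_div_assoc]
  gcongr (poisson x j) * ?_
  · exact (poisson_pos hx j).le
  rw [div_le_div_iff₀ (by positivity) (by positivity)]
  rcases le_or_gt j k with hjk | hjk
  · rw [if_pos (by omega), if_pos hjk]
    linarith [mul_le_mul_of_nonneg_left (poisson_mul_one_sub_poissonCDF_succ_le hx.le k) hx.le]
  · rw [if_neg (by omega), if_neg (by omega)]
    have := poisson_succ_mul_poissonCDF_le hx.le k
    nlinarith [mul_pos (mul_pos hx hk) (exp_pos (-x))]

lemma steinSol_succ_sub_steinSol_le (hx : 0 < x) (k : ℕ) :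
    steinSol x (k + 1) (k + 1) - steinSol x (k + 1) k ≤ (1 - exp (-x)) / x := by
  have hk := poisson_pos hx k
  have hk' := (poisson_pos hx (k + 1)).ne'
  have hdiv : poisson x (k + 1) * poissonCDF x k / poisson x k ≤ poissonCDF x (k + 1) - exp (-x) :=
    (div_le_iff₀' hk).2 (poisson_succ_mul_poissonCDF_le hx.le k)
  calc steinSol x (k + 1) (k + 1) - steinSol x (k + 1) k
      = (1 - poissonCDF x (k + 1) + poisson x (k + 1) * poissonCDF x k / poisson x k) / x := by
        rw [steinSol, steinSol, if_pos le_rfl, if_neg (by omega)]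
        field_simp
        ring
    _ ≤ (1 - exp (-x)) / x := by
        gcongr
        linarith

lemma sum_steinSol_succ_sub_le (hx : 0 < x) (A : Finset ℕ) (k : ℕ) :
    ∑ a ∈ A, (steinSol x a (k + 1) - steinSol x a k) ≤ (1 - exp (-x)) / x := by
  have hc : 0 ≤ (1 - exp (-x)) / x :=
    div_nonneg (sub_nonneg.2 (exp_le_one_iff.2 (neg_nonpos.2 hx.le))) hx.le
  calc ∑ a ∈ A, (steinSol x a (k + 1) - steinSol x a k)
      ≤ ∑ a ∈ A, if a = k + 1 then (1 - exp (-x)) / x else 0 := by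
        refine sum_le_sum fun a _ ↦ ?_
        split_ifs with ha
        · exact ha ▸ steinSol_succ_sub_steinSol_le hx k
        · exact sub_nonpos.2 (steinSol_succ_le hx ha)
    _ ≤ (1 - exp (-x)) / x := by
        rw [sum_ite_eq']
        split_ifs <;> simp [hc]

def binomial (n : ℕ) (p : ℝ) (k : ℕ) : ℝ := n.choose k * p ^ k * (1 - p) ^ (n - k)

lemma binomial_nonneg (hp₀ : 0 ≤ p) (hp₁ : p ≤ 1) (n k : ℕ) : 0 ≤ binomial n p k := by
  have : 0 ≤ 1 - p := sub_nonneg.2 hp₁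
  unfold binomial; positivity

lemma binomial_eq_zero_of_lt {n k : ℕ} (h : n < k) : binomial n p k = 0 := by
  simp [binomial, Nat.choose_eq_zero_of_lt h]

lemma sum_binomial (n : ℕ) (p : ℝ) : ∑ k ∈ range (n + 1), binomial n p k = 1 := by
  have h := add_pow p (1 - p) n
  rw [add_sub_cancel, one_pow] at h
  rw [h]
  exact sum_congr rfl fun k _ ↦ by rw [binomial]; ring

lemma hasSum_binomial (n : ℕ) (p : ℝ) : HasSum (binomial n p) 1 :=
  sum_binomial n p ▸ hasSum_sum_of_ne_finset_zero fun _ hk ↦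
    binomial_eq_zero_of_lt (by simpa using hk)

lemma binomial_succ_succ (n : ℕ) (p : ℝ) (k : ℕ) :
    binomial (n + 1) p (k + 1) = p * binomial n p k + (1 - p) * binomial n p (k + 1) := by
  simp only [binomial, Nat.choose_succ_succ, Nat.cast_add, Nat.add_sub_add_right]
  rcases lt_or_ge k n with hk | hk
  · rw [show n - k = n - (k + 1) + 1 by omega]
    ring
  · rw [Nat.choose_eq_zero_of_lt (by omega : n < k + 1), Nat.sub_eq_zero_of_le hk]
    ring

lemma succ_mul_binomial_succ (n : ℕ) (p : ℝ) (k : ℕ) :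
    (k + 1) * binomial (n + 1) p (k + 1) = (n + 1) * p * binomial n p k := by
  have h : ((n + 1) * n.choose k : ℝ) = (n + 1).choose (k + 1) * (k + 1) := by
    exact_mod_cast Nat.add_one_mul_choose_eq n k
  rw [binomial, binomial, Nat.add_sub_add_right]
  linear_combination (-p ^ (k + 1) * (1 - p) ^ (n - k)) * h

lemma sum_binomial_succ_mul (n : ℕ) (p : ℝ) (h : ℕ → ℝ) :
    ∑ k ∈ range (n + 2), binomial (n + 1) p k * h k
      = ∑ j ∈ range (n + 1), binomial n p j * ((1 - p) * h j + p * h (j + 1)) := by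
  have hlow : ∑ j ∈ range (n + 2), (1 - p) * binomial n p j * h j
      = ∑ j ∈ range (n + 1), (1 - p) * binomial n p j * h j := by
    rw [sum_range_succ, binomial_eq_zero_of_lt (Nat.lt_succ_self n)]
    ring
  have hzero : binomial (n + 1) p 0 = (1 - p) * binomial n p 0 := by
    simp only [binomial, Nat.choose_zero_right, Nat.sub_zero, pow_succ]
    ring
  calc ∑ k ∈ range (n + 2), binomial (n + 1) p k * h k
      = ∑ j ∈ range (n + 1), (p * binomial n p j * h (j + 1)
          + (1 - p) * binomial n p (j + 1) * h (j + 1)) + (1 - p) * binomial n p 0 * h 0 := by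
        rw [sum_range_succ', hzero]
        congr 1
        exact sum_congr rfl fun j _ ↦ by rw [binomial_succ_succ]; ring
    _ = ∑ j ∈ range (n + 1), p * binomial n p j * h (j + 1)
          + ∑ j ∈ range (n + 2), (1 - p) * binomial n p j * h j := by
        rw [sum_add_distrib, add_assoc, ← sum_range_succ' (fun j ↦ (1 - p) * binomial n p j * h j)]
    _ = _ := by
        rw [hlow, ← sum_add_distrib]
        exact sum_congr rfl fun j _ ↦ by ring

lemma sum_binomial_succ_mul_natCast_mul (n : ℕ) (p : ℝ) (h : ℕ → ℝ) :
    ∑ k ∈ range (n + 2), binomial (n + 1) p k * (k * h (k - 1))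
      = (n + 1) * p * ∑ j ∈ range (n + 1), binomial n p j * h j := by
  rw [sum_range_succ', mul_sum]
  simp only [Nat.cast_zero, zero_mul, mul_zero, add_zero, Nat.cast_succ, Nat.add_sub_cancel]
  refine sum_congr rfl fun j _ ↦ ?_
  linear_combination h j * succ_mul_binomial_succ n p j

lemma sum_binomial_stein (n : ℕ) (p : ℝ) (h : ℕ → ℝ) :
    ∑ k ∈ range (n + 2), binomial (n + 1) p k * ((n + 1) * p * h k - k * h (k - 1))
      = (n + 1) * p ^ 2 * ∑ j ∈ range (n + 1), binomial n p j * (h (j + 1) - h j) := by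
  have hsplit (k : ℕ) : binomial (n + 1) p k * ((n + 1) * p * h k - k * h (k - 1))
      = (n + 1) * p * (binomial (n + 1) p k * h k) - binomial (n + 1) p k * (k * h (k - 1)) := by
    ring
  rw [sum_congr rfl fun k _ ↦ hsplit k, sum_sub_distrib, ← mul_sum, sum_binomial_succ_mul,
    sum_binomial_succ_mul_natCast_mul, mul_sum, mul_sum, mul_sum, ← sum_sub_distrib]
  exact sum_congr rfl fun j _ ↦ by ring

lemma sum_binomial_eq_sum_range_mul_indicator (n : ℕ) (p : ℝ) (A : Finset ℕ) :
    ∑ k ∈ A, binomial n p k = ∑ k ∈ range (n + 1), binomial n p k * (if k ∈ A then 1 else 0) := by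
  simp only [mul_ite, mul_one, mul_zero, sum_ite_mem]
  refine (sum_subset inter_subset_right fun k hkA hk ↦ ?_).symm
  exact binomial_eq_zero_of_lt (by simp [hkA] at hk; omega)

lemma sum_binomial_sub_poisson_eq (hx : 0 < x) {n : ℕ} (hxp : (n + 1) * p = x)
    (A : Finset ℕ) :
    ∑ k ∈ A, (binomial (n + 1) p k - poisson x k)
      = (n + 1) * p ^ 2 * ∑ j ∈ range (n + 1),
          binomial n p j * ∑ a ∈ A, (steinSol x a (j + 1) - steinSol x a j) := by
  set g : ℕ → ℝ := fun k ↦ ∑ a ∈ A, steinSol x a k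
  calc ∑ k ∈ A, (binomial (n + 1) p k - poisson x k)
      = ∑ k ∈ range (n + 2), binomial (n + 1) p k
          * ((if k ∈ A then 1 else 0) - ∑ a ∈ A, poisson x a) := by
        rw [sum_sub_distrib, sum_binomial_eq_sum_range_mul_indicator]
        simp only [mul_sub, sum_sub_distrib, ← sum_mul, sum_binomial, one_mul]
    _ = ∑ k ∈ range (n + 2), binomial (n + 1) p k * ((n + 1) * p * g k - k * g (k - 1)) := by
        simp only [g, hxp, stein_eq_sum_steinSol hx]
    _ = _ := by
        rw [sum_binomial_stein]
        simp only [g, sum_sub_distrib]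

lemma sum_binomial_sub_poisson_le (hx : 0 ≤ x) {t : ℕ} (hxt : x ≤ t) (A : Finset ℕ) :
    ∑ k ∈ A, (binomial t (x / t) k - poisson x k) ≤ (1 - exp (-x)) * x / t := by
  rcases hx.eq_or_lt with rfl | hx
  · refine (sum_eq_zero fun k _ ↦ ?_).trans_le (by simp)
    cases k <;> simp [binomial, poisson]
  obtain ⟨n, rfl⟩ : ∃ n, t = n + 1 := Nat.exists_eq_add_one.2 (by exact_mod_cast hx.trans_le hxt)
  set p := x / (n + 1 : ℕ)
  have hxp : (n + 1) * p = x := by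
    simp only [p]; push_cast; field_simp
  have hp₀ : 0 ≤ p := by positivity
  have hp₁ : p ≤ 1 := div_le_one_of_le₀ hxt (by positivity)
  calc ∑ k ∈ A, (binomial (n + 1) p k - poisson x k)
      = (n + 1) * p ^ 2 * ∑ j ∈ range (n + 1),
          binomial n p j * ∑ a ∈ A, (steinSol x a (j + 1) - steinSol x a j) :=
        sum_binomial_sub_poisson_eq hx hxp A
    _ ≤ (n + 1) * p ^ 2 * ∑ j ∈ range (n + 1), binomial n p j * ((1 - exp (-x)) / x) := by
        gcongr with j
        · exact binomial_nonneg hp₀ hp₁ n j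
        · exact sum_steinSol_succ_sub_le hx A j
    _ = (1 - exp (-x)) * x / (n + 1 : ℕ) := by
        rw [← sum_mul, sum_binomial, ← hxp]
        push_cast
        field_simp

end

end SteinChen

open SteinChen

theorem binomial_poisson_tv_general (x : ℝ) (hx : 0 ≤ x) (t : ℕ) (hxt : x ≤ t) :
    (1 / 2) * ∑' k : ℕ,
        |(t.choose k : ℝ) * (x / t) ^ k * (1 - x / t) ^ (t - k) -
          Real.exp (-x) * x ^ k / (k.factorial : ℝ)| ≤ (1 - Real.exp (-x)) * x / t ∧
      (1 - Real.exp (-x)) * x / t ≤ x ^ 2 / t := by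
  have hd : HasSum (fun k ↦ binomial t (x / t) k - poisson x k) 0 := by
    simpa using (hasSum_binomial t (x / t)).sub (hasSum_poisson x)
  refine ⟨?_, ?_⟩
  · change 1 / 2 * ∑' k, |binomial t (x / t) k - poisson x k| ≤ _
    rw [half_tsum_abs_eq_sum_filter hd.summable hd.tsum_eq (range (t + 1)) fun k hk ↦ ?_]
    · exact sum_binomial_sub_poisson_le hx hxt _
    · rw [binomial_eq_zero_of_lt (by simpa using hk), zero_sub, neg_nonpos]
      exact poisson_nonneg hx k
  · rw [sq, mul_div_assoc, mul_div_assoc]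
    gcongr
    linarith [add_one_le_exp (-x)]

/-- Poisson approximation of the binomial (Barbour–Hall type): the TV distance between
`Binomial(t, x/t)` and `Poisson(x)` is at most `(1 - e^{-x}) x / t ≤ x²/t`. -/
theorem binomial_poisson_tv (x : ℝ) (hx : 0 ≤ x) (t : ℕ) (ht : 1 ≤ t) (hxt : x ≤ t) :
    (1 / 2) * ∑' k : ℕ,
        |(t.choose k : ℝ) * (x / t) ^ k * (1 - x / t) ^ (t - k) -
          Real.exp (-x) * x ^ k / (k.factorial : ℝ)| ≤ (1 - Real.exp (-x)) * x / t ∧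
      (1 - Real.exp (-x)) * x / t ≤ x ^ 2 / t :=
  binomial_poisson_tv_general x hx t hxt
end
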